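/- For all record types ρ₁, ρ₂ ∈ 𝕋_R: if lbl(ρ₁) ∩ lbl(ρ₂) = ∅ then ρ₁+ρ₂ = ρ₁∩ρ₂. -/
import Mathlib


/-- Intersection and record types `𝕋`. Record types are the types satisfying `IsRec`. -/
inductive Ty where
  | const : Nat → Ty
  | omega : Ty
  | arrow : Ty → Ty → Ty
  | inter : Ty → Ty → Ty
  | empty : Ty
  | fld : Nat → Ty → Ty
  | merge : Ty → Ty → Ty
deriving DecidableEq

/-- The record types `𝕋_R ⊆ 𝕋`. -/
inductive IsRec : Ty → Prop where
  | empty : IsRec .empty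
  | fld (l : Nat) (σ : Ty) : IsRec (.fld l σ)
  | merge {ρ₁ ρ₂ : Ty} : IsRec ρ₁ → IsRec ρ₂ → IsRec (.merge ρ₁ ρ₂)
  | inter {ρ₁ ρ₂ : Ty} : IsRec ρ₁ → IsRec ρ₂ → IsRec (.inter ρ₁ ρ₂)

/-- Subtyping on `𝕋`: the least preorder satisfying the BCD axioms together with
the record and record-merge axioms. -/
inductive TySub : Ty → Ty → Prop where
  | refl (σ : Ty) : TySub σ σ
  | trans {σ τ υ : Ty} : TySub σ τ → TySub τ υ → TySub σ υ
  | le_omega (σ : Ty) : TySub σ .omega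
  | omega_arrow : TySub .omega (.arrow .omega .omega)
  | inter_left (σ τ : Ty) : TySub (.inter σ τ) σ
  | inter_right (σ τ : Ty) : TySub (.inter σ τ) τ
  | le_inter {σ τ₁ τ₂ : Ty} : TySub σ τ₁ → TySub σ τ₂ → TySub σ (.inter τ₁ τ₂)
  | arrow_inter (σ τ₁ τ₂ : Ty) :
      TySub (.inter (.arrow σ τ₁) (.arrow σ τ₂)) (.arrow σ (.inter τ₁ τ₂))
  | arrow_mono {σ₁ σ₂ τ₁ τ₂ : Ty} : TySub σ₂ σ₁ → TySub τ₁ τ₂ →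
      TySub (.arrow σ₁ τ₁) (.arrow σ₂ τ₂)
  | fld_empty (l : Nat) (σ : Ty) : TySub (.fld l σ) .empty
  | fld_inter (l : Nat) (σ τ : Ty) :
      TySub (.inter (.fld l σ) (.fld l τ)) (.fld l (.inter σ τ))
  | fld_mono {σ τ : Ty} (l : Nat) : TySub σ τ → TySub (.fld l σ) (.fld l τ)
  | merge_empty_r {ρ : Ty} : IsRec ρ → TySub (.merge ρ .empty) ρ
  | merge_empty_r' {ρ : Ty} : IsRec ρ → TySub ρ (.merge ρ .empty)
  | merge_empty_l {ρ : Ty} : IsRec ρ → TySub (.merge .empty ρ) ρ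
  | merge_empty_l' {ρ : Ty} : IsRec ρ → TySub ρ (.merge .empty ρ)
  | merge_assoc {ρ₁ ρ₂ ρ₃ : Ty} : IsRec ρ₁ → IsRec ρ₂ → IsRec ρ₃ →
      TySub (.merge (.merge ρ₁ ρ₂) ρ₃) (.merge ρ₁ (.merge ρ₂ ρ₃))
  | merge_assoc' {ρ₁ ρ₂ ρ₃ : Ty} : IsRec ρ₁ → IsRec ρ₂ → IsRec ρ₃ →
      TySub (.merge ρ₁ (.merge ρ₂ ρ₃)) (.merge (.merge ρ₁ ρ₂) ρ₃)
  | merge_inter {ρ₁ ρ₂ ρ₃ : Ty} : IsRec ρ₁ → IsRec ρ₂ → IsRec ρ₃ →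
      TySub (.merge (.inter ρ₁ ρ₂) ρ₃) (.inter (.merge ρ₁ ρ₃) (.merge ρ₂ ρ₃))
  | merge_inter' {ρ₁ ρ₂ ρ₃ : Ty} : IsRec ρ₁ → IsRec ρ₂ → IsRec ρ₃ →
      TySub (.inter (.merge ρ₁ ρ₃) (.merge ρ₂ ρ₃)) (.merge (.inter ρ₁ ρ₂) ρ₃)
  | fld_absorb {ρ : Ty} (l : Nat) (σ τ : Ty) : IsRec ρ →
      TySub (.merge (.fld l σ) (.inter (.fld l τ) ρ)) (.inter (.fld l τ) ρ)
  | fld_absorb' {ρ : Ty} (l : Nat) (σ τ : Ty) : IsRec ρ →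
      TySub (.inter (.fld l τ) ρ) (.merge (.fld l σ) (.inter (.fld l τ) ρ))
  | fld_comm {ρ : Ty} {l l' : Nat} (σ τ : Ty) : l ≠ l' → IsRec ρ →
      TySub (.merge (.fld l σ) (.inter (.fld l' τ) ρ))
          (.inter (.fld l' τ) (.merge (.fld l σ) ρ))
  | fld_comm' {ρ : Ty} {l l' : Nat} (σ τ : Ty) : l ≠ l' → IsRec ρ →
      TySub (.inter (.fld l' τ) (.merge (.fld l σ) ρ))
          (.merge (.fld l σ) (.inter (.fld l' τ) ρ))
  | merge_mono_l {ρ₁ ρ₂ ρ : Ty} : IsRec ρ₁ → IsRec ρ₂ → IsRec ρ →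
      TySub ρ₁ ρ₂ → TySub (.merge ρ₁ ρ) (.merge ρ₂ ρ)
  | merge_congr_r {ρ ρ₁ ρ₂ : Ty} : IsRec ρ → IsRec ρ₁ → IsRec ρ₂ →
      TySub ρ₁ ρ₂ → TySub ρ₂ ρ₁ → TySub (.merge ρ ρ₁) (.merge ρ ρ₂)

/-- Type equality: mutual subtyping. -/
def TyEq (σ τ : Ty) : Prop := TySub σ τ ∧ TySub τ σ
/-- The label map on record types. -/
def lbl : Ty → Finset Nat
  | .const _ => ∅
  | .omega => ∅
  | .arrow _ _ => ∅
  | .empty => ∅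
  | .fld l _ => {l}
  | .inter ρ₁ ρ₂ => lbl ρ₁ ∪ lbl ρ₂
  | .merge ρ₁ ρ₂ => lbl ρ₁ ∪ lbl ρ₂

/- ### Auxiliary development ### -/

theorem TySub.inter_mono {a b c d : Ty} (h1 : TySub a c) (h2 : TySub b d) :
    TySub (.inter a b) (.inter c d) :=
  .le_inter ((TySub.inter_left a b).trans h1) ((TySub.inter_right a b).trans h2)

theorem TyEq.rfl {σ : Ty} : TyEq σ σ := ⟨.refl σ, .refl σ⟩
theorem TyEq.symm {σ τ : Ty} (h : TyEq σ τ) : TyEq τ σ := ⟨h.2, h.1⟩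
theorem TyEq.trans {σ τ υ : Ty} (h1 : TyEq σ τ) (h2 : TyEq τ υ) : TyEq σ υ :=
  ⟨h1.1.trans h2.1, h2.2.trans h1.2⟩
theorem TyEq.inter_congr {a b c d : Ty} (h1 : TyEq a c) (h2 : TyEq b d) :
    TyEq (.inter a b) (.inter c d) := ⟨h1.1.inter_mono h2.1, h1.2.inter_mono h2.2⟩

theorem rec_le_empty {ρ : Ty} (h : IsRec ρ) : TySub ρ .empty := by
  induction h with
  | empty => exact .refl _
  | fld l σ => exact .fld_empty l σ
  | merge h1 h2 ih1 ih2 =>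
    exact ((TySub.merge_mono_l h1 .empty h2 ih1).trans (.merge_empty_l h2)).trans ih2
  | inter h1 h2 ih1 ih2 => exact (TySub.inter_left _ _).trans ih1

theorem inter_swap (a b c : Ty) :
    TyEq (.inter a (.inter b c)) (.inter b (.inter a c)) := by
  constructor <;>
  exact .le_inter ((TySub.inter_right _ _).trans (.inter_left _ _))
    (.le_inter (.inter_left _ _) ((TySub.inter_right _ _).trans (.inter_right _ _)))

theorem inter_assoc' (a b c : Ty) :
    TyEq (.inter (.inter a b) c) (.inter a (.inter b c)) :=
  ⟨.le_inter ((TySub.inter_left _ _).trans (.inter_left _ _))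
      (.le_inter ((TySub.inter_left _ _).trans (.inter_right _ _)) (.inter_right _ _)),
   .le_inter (.le_inter (.inter_left _ _) ((TySub.inter_right _ _).trans (.inter_left _ _)))
      ((TySub.inter_right _ _).trans (.inter_right _ _))⟩

theorem inter_distrib' (a b c : Ty) :
    TyEq (.inter (.inter a c) (.inter b c)) (.inter (.inter a b) c) :=
  ⟨.le_inter (.le_inter ((TySub.inter_left _ _).trans (.inter_left _ _))
        ((TySub.inter_right _ _).trans (.inter_left _ _)))
      ((TySub.inter_left _ _).trans (.inter_right _ _)),
   .le_inter (.le_inter ((TySub.inter_left _ _).trans (.inter_left _ _)) (.inter_right _ _))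
      (.le_inter ((TySub.inter_left _ _).trans (.inter_right _ _)) (.inter_right _ _))⟩

theorem merge_congr {a b c d : Ty} (ha : IsRec a) (hb : IsRec b) (hc : IsRec c)
    (hd : IsRec d) (h1 : TyEq a c) (h2 : TyEq b d) :
    TyEq (.merge a b) (.merge c d) :=
  ⟨(TySub.merge_mono_l ha hc hb h1.1).trans (TySub.merge_congr_r hc hb hd h2.1 h2.2),
   (TySub.merge_mono_l hc ha hd h1.2).trans (TySub.merge_congr_r ha hd hb h2.2 h2.1)⟩

/-- Canonical record types: right-nested intersections of fields ending in `empty`. -/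
inductive Canon : Ty → Prop where
  | empty : Canon .empty
  | cons (l : Nat) (σ : Ty) {ρ : Ty} : Canon ρ → Canon (.inter (.fld l σ) ρ)

theorem Canon.isRec {ρ : Ty} (h : Canon ρ) : IsRec ρ := by
  induction h with
  | empty => exact .empty
  | cons l σ _ ih => exact .inter (.fld l σ) ih

theorem fld_eq_canon (l : Nat) (σ : Ty) :
    TyEq (.fld l σ) (.inter (.fld l σ) .empty) :=
  ⟨.le_inter (.refl _) (.fld_empty l σ), .inter_left _ _⟩

theorem canonAppend {ρa ρb : Ty} (ha : Canon ρa) (hb : Canon ρb) :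
    ∃ ρ, Canon ρ ∧ TyEq (.inter ρa ρb) ρ ∧ lbl ρ ⊆ lbl ρa ∪ lbl ρb := by
  induction ha with
  | empty =>
    refine ⟨ρb, hb, ⟨.inter_right _ _, .le_inter (rec_le_empty hb.isRec) (.refl _)⟩, ?_⟩
    simp [lbl]
  | cons l σ hρ ih =>
    obtain ⟨ρc, hc, heq, hsub⟩ := ih
    refine ⟨.inter (.fld l σ) ρc, .cons l σ hc,
      (inter_assoc' _ _ _).trans (TyEq.inter_congr TyEq.rfl heq), ?_⟩
    simp only [lbl, Finset.union_assoc]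
    exact Finset.union_subset_union_right hsub

theorem mergeFldCanon (l : Nat) (σ : Ty) {ρ₂ : Ty} (h : Canon ρ₂) :
    ∃ ρ, Canon ρ ∧ TyEq (.merge (.fld l σ) ρ₂) ρ ∧ lbl ρ ⊆ {l} ∪ lbl ρ₂ := by
  induction h with
  | empty =>
    refine ⟨.inter (.fld l σ) .empty, .cons l σ .empty,
      ⟨(TySub.merge_empty_r (.fld l σ)).trans (fld_eq_canon l σ).1,
       (fld_eq_canon l σ).2.trans (.merge_empty_r' (.fld l σ))⟩, ?_⟩
    simp [lbl]
  | @cons l' τ ρ' hρ ih =>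
    obtain ⟨ρc, hc, heq, hsub⟩ := ih
    by_cases hll : l = l'
    · subst hll
      refine ⟨.inter (.fld l τ) ρ', .cons l τ hρ,
        ⟨.fld_absorb l σ τ hρ.isRec, .fld_absorb' l σ τ hρ.isRec⟩, ?_⟩
      simp [lbl, Finset.subset_iff]
    · refine ⟨.inter (.fld l' τ) ρc, .cons l' τ hc,
        TyEq.trans ⟨.fld_comm σ τ hll hρ.isRec, .fld_comm' σ τ hll hρ.isRec⟩
          (TyEq.inter_congr TyEq.rfl heq), ?_⟩
      simp only [lbl] at hsub ⊢
      intro x hx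
      rcases Finset.mem_union.1 hx with hx | hx
      · simp [lbl] at hx ⊢; tauto
      · have := hsub hx
        simp [lbl] at this ⊢; tauto

theorem mergeCanon {ρ₁ ρ₂ : Ty} (h1 : Canon ρ₁) (h2 : Canon ρ₂) :
    ∃ ρ, Canon ρ ∧ TyEq (.merge ρ₁ ρ₂) ρ ∧ lbl ρ ⊆ lbl ρ₁ ∪ lbl ρ₂ := by
  induction h1 with
  | empty =>
    refine ⟨ρ₂, h2, ⟨.merge_empty_l h2.isRec, .merge_empty_l' h2.isRec⟩, ?_⟩
    simp [lbl]
  | @cons l σ ρ' hρ ih =>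
    obtain ⟨ρc, hc, heq, hsub⟩ := ih
    obtain ⟨ρf, hf, heqf, hsubf⟩ := mergeFldCanon l σ h2
    obtain ⟨ρr, hr, heqr, hsubr⟩ := canonAppend hf hc
    refine ⟨ρr, hr, ?_, ?_⟩
    · exact TyEq.trans
        ⟨TySub.merge_inter (.fld l σ) hρ.isRec h2.isRec,
         TySub.merge_inter' (.fld l σ) hρ.isRec h2.isRec⟩
        ((TyEq.inter_congr heqf heq).trans heqr)
    · intro x hx
      have := hsubr hx
      rcases Finset.mem_union.1 this with hx | hx
      · have := hsubf hx
        simp [lbl] at this ⊢; tauto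
      · have := hsub hx
        simp [lbl] at this ⊢; tauto

theorem normalizeRec {ρ : Ty} (h : IsRec ρ) :
    ∃ ρ', Canon ρ' ∧ TyEq ρ ρ' ∧ lbl ρ' ⊆ lbl ρ := by
  induction h with
  | empty => exact ⟨.empty, .empty, TyEq.rfl, Finset.Subset.refl _⟩
  | fld l σ =>
    refine ⟨.inter (.fld l σ) .empty, .cons l σ .empty, fld_eq_canon l σ, ?_⟩
    simp [lbl]
  | @merge ρa ρb ha hb iha ihb =>
    obtain ⟨ρa', ha', heqa, hsa⟩ := iha
    obtain ⟨ρb', hb', heqb, hsb⟩ := ihb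
    obtain ⟨ρr, hr, heqr, hsr⟩ := mergeCanon ha' hb'
    refine ⟨ρr, hr, TyEq.trans (merge_congr ha hb ha'.isRec hb'.isRec heqa heqb) heqr, ?_⟩
    intro x hx
    have := hsr hx
    simp [lbl] at this ⊢
    rcases this with hx | hx
    · exact Or.inl (hsa hx)
    · exact Or.inr (hsb hx)
  | @inter ρa ρb ha hb iha ihb =>
    obtain ⟨ρa', ha', heqa, hsa⟩ := iha
    obtain ⟨ρb', hb', heqb, hsb⟩ := ihb
    obtain ⟨ρr, hr, heqr, hsr⟩ := canonAppend ha' hb'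
    refine ⟨ρr, hr, TyEq.trans (TyEq.inter_congr heqa heqb) heqr, ?_⟩
    intro x hx
    have := hsr hx
    simp [lbl] at this ⊢
    rcases this with hx | hx
    · exact Or.inl (hsa hx)
    · exact Or.inr (hsb hx)

theorem mergeFldDisj (l : Nat) (σ : Ty) {ρ₂ : Ty} (h : Canon ρ₂) (hl : l ∉ lbl ρ₂) :
    TyEq (.merge (.fld l σ) ρ₂) (.inter (.fld l σ) ρ₂) := by
  induction h with
  | empty =>
    exact ⟨(TySub.merge_empty_r (.fld l σ)).trans (fld_eq_canon l σ).1,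
      (fld_eq_canon l σ).2.trans (.merge_empty_r' (.fld l σ))⟩
  | @cons l' τ ρ' hρ ih =>
    have hll : l ≠ l' := by simp [lbl] at hl; tauto
    have hl' : l ∉ lbl ρ' := by simp [lbl] at hl; tauto
    exact TyEq.trans ⟨.fld_comm σ τ hll hρ.isRec, .fld_comm' σ τ hll hρ.isRec⟩
      ((TyEq.inter_congr TyEq.rfl (ih hl')).trans
        ((inter_swap _ _ _).symm))

theorem canonMergeDisj {ρ₁ ρ₂ : Ty} (h1 : Canon ρ₁) (h2 : Canon ρ₂)
    (hd : ∀ x ∈ lbl ρ₁, x ∉ lbl ρ₂) : TyEq (.merge ρ₁ ρ₂) (.inter ρ₁ ρ₂) := by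
  induction h1 with
  | empty =>
    exact ⟨(TySub.merge_empty_l h2.isRec).trans
        (.le_inter (rec_le_empty h2.isRec) (.refl _)),
      (TySub.inter_right _ _).trans (.merge_empty_l' h2.isRec)⟩
  | @cons l σ ρ' hρ ih =>
    have hl : l ∉ lbl ρ₂ := hd l (by simp [lbl])
    have hd' : ∀ x ∈ lbl ρ', x ∉ lbl ρ₂ := fun x hx => hd x (by simp [lbl]; tauto)
    exact TyEq.trans
      ⟨TySub.merge_inter (.fld l σ) hρ.isRec h2.isRec,
       TySub.merge_inter' (.fld l σ) hρ.isRec h2.isRec⟩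
      ((TyEq.inter_congr (mergeFldDisj l σ h2 hl) (ih hd')).trans
        (inter_distrib' _ _ _))

/-- If the label sets of two record types are disjoint, then their type-merge
equals their intersection. -/
theorem merge_of_disjoint_labels (ρ₁ ρ₂ : Ty) (h₁ : IsRec ρ₁) (h₂ : IsRec ρ₂)
    (hd : lbl ρ₁ ∩ lbl ρ₂ = ∅) :
    TyEq (.merge ρ₁ ρ₂) (.inter ρ₁ ρ₂) := by
  obtain ⟨ρ₁', h1', heq1, hs1⟩ := normalizeRec h₁
  obtain ⟨ρ₂', h2', heq2, hs2⟩ := normalizeRec h₂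
  have hd' : ∀ x ∈ lbl ρ₁', x ∉ lbl ρ₂' := by
    intro x hx hx2
    have : x ∈ lbl ρ₁ ∩ lbl ρ₂ := Finset.mem_inter.2 ⟨hs1 hx, hs2 hx2⟩
    simp [hd] at this
  exact TyEq.trans (merge_congr h₁ h₂ h1'.isRec h2'.isRec heq1 heq2)
    ((canonMergeDisj h1' h2' hd').trans (TyEq.inter_congr heq1.symm heq2.symm))
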